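/- arXiv:math/9310227 — 2 statements merged into one kernel-verified Lean document; each statement's English description precedes it below -/
import Mathlib

section
/- The extended binary Golay code of length 24 is not Z4-linear. -/
def alphaZ4 (i : ZMod 4) : ZMod 2 := (i.val : ZMod 2)
def betaZ4 (i : ZMod 4) : ZMod 2 := ((i.val / 2 : ℕ) : ZMod 2)
def gammaZ4 (i : ZMod 4) : ZMod 2 := betaZ4 i + alphaZ4 i

def grayMap {n : ℕ} (a : Fin n → ZMod 4) : (Fin n ⊕ Fin n) → ZMod 2 :=
  Sum.elim (fun i => betaZ4 (a i)) (fun i => gammaZ4 (a i))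

/-- The Reed-Muller code RM(r,m): the span of the evaluation vectors of the
monomials of degree at most `r` in `m` Boolean variables. -/
def RM (r m : ℕ) : Submodule (ZMod 2) ((Fin m → ZMod 2) → ZMod 2) :=
  Submodule.span (ZMod 2)
    { v | ∃ S : Finset (Fin m), S.card ≤ r ∧ v = fun x => ∏ j ∈ S, x j }

/-- A binary code of even length `2n` (coordinates indexed by `ι`) is
`Z4`-linear if after some identification of its coordinates with
`Fin n ⊕ Fin n` it is the Gray image of a linear quaternary code. -/
def IsZ4Linear {ι : Type} (C : Set (ι → ZMod 2)) (n : ℕ) : Prop :=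
  ∃ e : ι ≃ (Fin n ⊕ Fin n), ∃ D : AddSubgroup (Fin n → ZMod 4),
    (fun c => c ∘ e.symm) '' C = grayMap '' (D : Set (Fin n → ZMod 4))


variable {ι : Type} [DecidableEq ι]

def coeffF (χ : Finset ι → ZMod 2) (S : Finset ι) : ZMod 2 :=
  ∑ x ∈ S.powerset, χ x

lemma exists_coeffF {χ : Finset ι → ZMod 2} :
    ∀ (x : Finset ι), χ x ≠ 0 → ∃ S, S ⊆ x ∧ coeffF χ S ≠ 0 := by
  intro x
  induction x using Finset.strongInduction with
  | _ x ih =>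
    intro hx
    by_cases hc : coeffF χ x ≠ 0
    · exact ⟨x, Finset.Subset.refl x, hc⟩
    · push_neg at hc
      -- coeffF χ x = χ x + ∑ over proper subsets
      have hsplit : coeffF χ x = ∑ z ∈ x.powerset \ {x}, χ z + χ x := by
        rw [coeffF, ← Finset.sum_eq_sum_sdiff_singleton_add (Finset.mem_powerset_self x)]
      have hsum : ∑ z ∈ x.powerset \ {x}, χ z ≠ 0 := by
        intro h0
        rw [hsplit, h0, zero_add] at hc
        exact hx hc
      obtain ⟨z, hz, hzne⟩ := Finset.exists_ne_zero_of_sum_ne_zero hsum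
      rw [Finset.mem_sdiff, Finset.mem_powerset, Finset.mem_singleton] at hz
      have hzss : z ⊂ x := Finset.ssubset_iff_subset_ne.2 ⟨hz.1, hz.2⟩
      obtain ⟨S, hS1, hS2⟩ := ih z hzss hzne
      exact ⟨S, hS1.trans hz.1, hS2⟩

lemma DLbound :
    ∀ (u : Finset ι) (d : ℕ) (χ : Finset ι → ZMod 2),
    (∀ x, χ x ≠ 0 → x ⊆ u) →
    (∀ S ⊆ u, coeffF χ S ≠ 0 → S.card ≤ d) →
    (∃ x, χ x ≠ 0) →
    2 ^ (u.card - d) ≤ (u.powerset.filter (fun x => χ x ≠ 0)).card := by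
  intro u
  induction u using Finset.induction_on with
  | empty =>
    intro d χ hsupp hdeg ⟨x, hx⟩
    have hxe : x = ∅ := Finset.subset_empty.1 (hsupp x hx)
    subst hxe
    have : (∅ : Finset ι) ∈ (∅ : Finset ι).powerset.filter (fun x => χ x ≠ 0) := by
      simp [hx]
    calc 2 ^ ((∅ : Finset ι).card - d) = 1 := by simp
    _ ≤ _ := Finset.card_pos.2 ⟨∅, this⟩
  | @insert j u' hj ih =>
    intro d χ hsupp hdeg ⟨x₀, hx₀⟩
    set χ0 : Finset ι → ZMod 2 := fun x => if j ∈ x then 0 else χ x with hχ0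
    set χ1 : Finset ι → ZMod 2 := fun x => if j ∈ x then 0 else χ (insert j x) with hχ1
    -- supports
    have hsupp0 : ∀ x, χ0 x ≠ 0 → x ⊆ u' := by
      intro x hx
      rw [hχ0] at hx; simp only at hx
      by_cases h : j ∈ x
      · simp [h] at hx
      · rw [if_neg h] at hx
        intro a ha
        rcases Finset.mem_insert.1 (hsupp x hx ha) with h1 | h1
        · exact absurd (h1 ▸ ha) h
        · exact h1
    have hsupp1 : ∀ x, χ1 x ≠ 0 → x ⊆ u' := by
      intro x hx
      rw [hχ1] at hx; simp only at hx
      by_cases h : j ∈ x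
      · simp [h] at hx
      · rw [if_neg h] at hx
        intro a ha
        have := hsupp _ hx (Finset.mem_insert_of_mem ha)
        rcases Finset.mem_insert.1 this with h1 | h1
        · exact absurd (h1 ▸ ha) h
        · exact h1
    -- coefficients
    have hc0 : ∀ S ⊆ u', coeffF χ0 S = coeffF χ S := by
      intro S hS
      apply Finset.sum_congr rfl
      intro x hx
      have : j ∉ x := fun hjx =>
        hj (hS ((Finset.mem_powerset.1 hx) hjx))
      rw [hχ0]; simp [this]
    have hkey : ∀ S ⊆ u', coeffF χ (insert j S) = coeffF χ S + coeffF χ1 S := by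
      intro S hS
      have hjS : j ∉ S := fun h => hj (hS h)
      rw [coeffF, Finset.powerset_insert, Finset.sum_union]
      · congr 1
        rw [Finset.sum_image]
        · apply Finset.sum_congr rfl
          intro x hx
          have hjx : j ∉ x := fun h => hjS ((Finset.mem_powerset.1 hx) h)
          rw [hχ1]; simp [hjx]
        · intro x hx y hy hxy
          have hjx : j ∉ x := fun h => hjS ((Finset.mem_powerset.1 hx) h)
          have hjy : j ∉ y := fun h => hjS ((Finset.mem_powerset.1 hy) h)
          have := congrArg (fun s => Finset.erase s j) hxy
          simpa [Finset.erase_insert hjx, Finset.erase_insert hjy] using this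
      · rw [Finset.disjoint_left]
        intro a ha hb
        obtain ⟨y, hy, rfl⟩ := Finset.mem_image.1 hb
        exact hjS ((Finset.mem_powerset.1 ha) (Finset.mem_insert_self j y))
    -- support split
    have hcardsplit :
        ((insert j u').powerset.filter (fun x => χ x ≠ 0)).card
        = (u'.powerset.filter (fun x => χ0 x ≠ 0)).card
          + (u'.powerset.filter (fun x => χ1 x ≠ 0)).card := by
      rw [Finset.powerset_insert, Finset.filter_union,
        Finset.card_union_of_disjoint]
      · congr 1
        · apply congrArg Finset.card
          apply Finset.filter_congr
          intro x hx
          have hjx : j ∉ x := fun h => hj ((Finset.mem_powerset.1 hx) h)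
          rw [hχ0]; simp [hjx]
        · rw [Finset.filter_image]
          rw [Finset.card_image_of_injOn]
          · apply congrArg Finset.card
            apply Finset.filter_congr
            intro x hx
            have hjx : j ∉ x := fun h => hj ((Finset.mem_powerset.1 hx) h)
            rw [hχ1]; simp [hjx]
          · intro x hx y hy hxy
            have hx' := Finset.mem_powerset.1 (Finset.mem_of_mem_filter x (Finset.mem_coe.1 hx))
            have hy' := Finset.mem_powerset.1 (Finset.mem_of_mem_filter y (Finset.mem_coe.1 hy))
            have hjx : j ∉ x := fun h => hj (hx' h)
            have hjy : j ∉ y := fun h => hj (hy' h)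
            have := congrArg (fun s => Finset.erase s j) hxy
            simpa [Finset.erase_insert hjx, Finset.erase_insert hjy] using this
      · rw [Finset.disjoint_left]
        intro a ha hb
        have h1 := Finset.mem_of_mem_filter a ha
        have h2 := Finset.mem_of_mem_filter a hb
        obtain ⟨y, hy, rfl⟩ := Finset.mem_image.1 h2
        exact hj ((Finset.mem_powerset.1 h1) (Finset.mem_insert_self j y))
    rw [hcardsplit, Finset.card_insert_of_notMem hj]
    by_cases h1 : ∃ x, χ1 x ≠ 0
    · by_cases h0 : ∃ x, χ0 x ≠ 0
      · have hdeg0 : ∀ S ⊆ u', coeffF χ0 S ≠ 0 → S.card ≤ d := fun S hS hne =>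
          hdeg S (hS.trans (Finset.subset_insert j u')) (by rwa [hc0 S hS] at hne)
        have hdeg1 : ∀ S ⊆ u', coeffF χ1 S ≠ 0 → S.card ≤ d := by
          intro S hS hne
          have hjS : j ∉ S := fun h => hj (hS h)
          by_cases hcS : coeffF χ S = 0
          · have hni : coeffF χ (insert j S) ≠ 0 := by
              rw [hkey S hS, hcS, zero_add]; exact hne
            have := hdeg (insert j S) (Finset.insert_subset_insert j hS) hni
            rw [Finset.card_insert_of_notMem hjS] at this; omega
          · exact hdeg S (hS.trans (Finset.subset_insert j u')) hcS
        have b0 := ih d χ0 hsupp0 hdeg0 h0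
        have b1 := ih d χ1 hsupp1 hdeg1 h1
        calc 2 ^ (u'.card + 1 - d) ≤ 2 ^ (u'.card - d + 1) :=
              Nat.pow_le_pow_right (by norm_num) (by omega)
        _ = 2 ^ (u'.card - d) + 2 ^ (u'.card - d) := by ring
        _ ≤ _ := Nat.add_le_add b0 b1
      · -- χ0 = 0
        push_neg at h0
        have hx₀j : j ∈ x₀ := by
          by_contra hn
          exact hx₀ (by simpa [hχ0, hn] using h0 x₀)
        have hx₀' : χ1 (x₀.erase j) ≠ 0 := by
          rw [hχ1]; simp only [Finset.notMem_erase, if_neg, Finset.insert_erase hx₀j]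
          simpa using hx₀
        have hczero : ∀ S ⊆ u', coeffF χ S = 0 := by
          intro S hS
          rw [← hc0 S hS]
          simp [coeffF, h0]
        have hdeg1 : ∀ S ⊆ u', coeffF χ1 S ≠ 0 → S.card + 1 ≤ d := by
          intro S hS hne
          have hjS : j ∉ S := fun h => hj (hS h)
          have hni : coeffF χ (insert j S) ≠ 0 := by
            rw [hkey S hS, hczero S hS, zero_add]; exact hne
          have := hdeg (insert j S) (Finset.insert_subset_insert j hS) hni
          rwa [Finset.card_insert_of_notMem hjS] at this
        obtain ⟨S₀, hS₀, hS₀ne⟩ := exists_coeffF _ hx₀'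
        have hd1 : 1 ≤ d := le_trans (by omega) (hdeg1 S₀ (hS₀.trans (hsupp1 _ hx₀')) hS₀ne)
        have b1 := ih (d - 1) χ1 hsupp1
          (fun S hS hne => by have := hdeg1 S hS hne; omega) ⟨_, hx₀'⟩
        calc 2 ^ (u'.card + 1 - d) = 2 ^ (u'.card - (d - 1)) := by
              congr 1; omega
        _ ≤ _ := le_trans b1 (Nat.le_add_left _ _)
    · -- χ1 = 0
      push_neg at h1
      have hx₀j : j ∉ x₀ := by
        intro hn
        apply hx₀
        have := h1 (x₀.erase j)
        rw [hχ1] at this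
        simpa [Finset.notMem_erase, Finset.insert_erase hn] using this
      have hx₀' : χ0 x₀ ≠ 0 := by rw [hχ0]; simpa [hx₀j] using hx₀
      have hdeg0 : ∀ S ⊆ u', coeffF χ0 S ≠ 0 → S.card + 1 ≤ d := by
        intro S hS hne
        have hjS : j ∉ S := fun h => hj (hS h)
        have hc1z : coeffF χ1 S = 0 := by simp [coeffF, h1]
        have hni : coeffF χ (insert j S) ≠ 0 := by
          rw [hkey S hS, hc1z, add_zero, ← hc0 S hS]; exact hne
        have := hdeg (insert j S) (Finset.insert_subset_insert j hS) hni
        rwa [Finset.card_insert_of_notMem hjS] at this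
      obtain ⟨S₀, hS₀, hS₀ne⟩ := exists_coeffF _ hx₀'
      have hd1 : 1 ≤ d := le_trans (by omega) (hdeg0 S₀ (hS₀.trans (hsupp0 _ hx₀')) hS₀ne)
      have b0 := ih (d - 1) χ0 hsupp0
        (fun S hS hne => by have := hdeg0 S hS hne; omega) ⟨_, hx₀'⟩
      calc 2 ^ (u'.card + 1 - d) = 2 ^ (u'.card - (d - 1)) := by
            congr 1; omega
      _ ≤ _ := le_trans b0 (Nat.le_add_right _ _)

lemma cast_two_pow (k : ℕ) : ((2 ^ k : ℕ) : ZMod 2) = if k = 0 then 1 else 0 := by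
  cases k with
  | zero => simp
  | succ n =>
    rw [if_neg (Nat.succ_ne_zero n), pow_succ]
    push_cast
    simp [show (2 : ZMod 2) = 0 from rfl]

lemma incl_excl (A B : Finset ι) :
    ∑ T ∈ A.powerset, (if T ⊆ B then (1 : ZMod 2) else 0)
      = if A ∩ B = ∅ then 1 else 0 := by
  rw [Finset.sum_boole]
  have h : A.powerset.filter (fun T => T ⊆ B) = (A ∩ B).powerset := by
    ext T
    simp only [Finset.mem_filter, Finset.mem_powerset]
    exact ⟨fun ⟨h1, h2⟩ => Finset.subset_inter h1 h2,
      fun h => ⟨h.trans Finset.inter_subset_left, h.trans Finset.inter_subset_right⟩⟩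
  rw [h, Finset.card_powerset, cast_two_pow]
  exact if_congr (by rw [Finset.card_eq_zero]) rfl rfl

lemma no_small_design {m : ℕ} (H : Fin 12 → Finset (Fin m)) (hinj : Function.Injective H)
    (hmom : ∀ T : Finset (Fin m), T.card ≤ 3 →
      ∑ i : Fin 12, (if T ⊆ H i then (1 : ZMod 2) else 0) = 0) : False := by
  classical
  set χ : Finset (Fin m) → ZMod 2 := fun x => ∑ i : Fin 12, (if H i = x then 1 else 0) with hχ
  have hχval : ∀ x, χ x = if x ∈ Finset.univ.image H then 1 else 0 := by
    intro x
    by_cases hx : x ∈ Finset.univ.image H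
    · obtain ⟨i₀, _, rfl⟩ := Finset.mem_image.1 hx
      rw [if_pos hx]
      simp only [hχ]
      rw [Finset.sum_eq_single i₀]
      · simp
      · intro b _ hb; exact if_neg (fun h => hb (hinj h))
      · intro h; exact absurd (Finset.mem_univ i₀) h
    · rw [if_neg hx]
      simp only [hχ]
      apply Finset.sum_eq_zero
      intro i _
      exact if_neg (fun h => hx (Finset.mem_image.2 ⟨i, Finset.mem_univ i, h⟩))
  have hcoeff : ∀ S : Finset (Fin m),
      coeffF χ S = ∑ i : Fin 12, (if H i ⊆ S then 1 else 0) := by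
    intro S
    simp only [coeffF, hχ]
    rw [Finset.sum_comm]
    apply Finset.sum_congr rfl
    intro i _
    rw [Finset.sum_ite_eq S.powerset (H i) (fun _ => (1 : ZMod 2))]
    exact if_congr Finset.mem_powerset rfl rfl
  have hvanish : ∀ S : Finset (Fin m), (Finset.univ \ S).card ≤ 3 → coeffF χ S = 0 := by
    intro S hS
    rw [hcoeff]
    have h1 : ∀ i : Fin 12, (if H i ⊆ S then (1 : ZMod 2) else 0)
        = ∑ T ∈ (Finset.univ \ S).powerset, (if T ⊆ H i then (1 : ZMod 2) else 0) := by
      intro i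
      rw [incl_excl]
      apply if_congr _ rfl rfl
      rw [Finset.eq_empty_iff_forall_notMem]
      constructor
      · intro h a ha
        obtain ⟨h1, h2⟩ := Finset.mem_inter.1 ha
        exact (Finset.mem_sdiff.1 h1).2 (h h2)
      · intro h a ha
        by_contra hna
        exact h a (Finset.mem_inter.2 ⟨Finset.mem_sdiff.2 ⟨Finset.mem_univ a, hna⟩, ha⟩)
    rw [Finset.sum_congr rfl (fun i _ => h1 i), Finset.sum_comm]
    apply Finset.sum_eq_zero
    intro T hT
    exact hmom T (le_trans (Finset.card_le_card (Finset.mem_powerset.1 hT)) hS)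
  have hne : χ (H 0) ≠ 0 := by
    rw [hχval, if_pos (Finset.mem_image_of_mem H (Finset.mem_univ 0))]
    exact one_ne_zero
  by_cases hm : 4 ≤ m
  · have hdeg : ∀ S ⊆ (Finset.univ : Finset (Fin m)), coeffF χ S ≠ 0 → S.card ≤ m - 4 := by
      intro S _ hne'
      by_contra hc
      push_neg at hc
      apply hne'
      apply hvanish
      rw [Finset.card_sdiff_of_subset (Finset.subset_univ S), Finset.card_univ, Fintype.card_fin]
      have := Finset.card_le_univ S
      rw [Fintype.card_fin] at this
      omega
    have hb := DLbound Finset.univ (m - 4) χ (fun x _ => Finset.subset_univ x) hdeg ⟨_, hne⟩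
    have hsuppeq : Finset.univ.powerset.filter (fun x => χ x ≠ 0) = Finset.univ.image H := by
      ext x
      simp only [Finset.mem_filter, Finset.mem_powerset, Finset.subset_univ, true_and]
      rw [hχval x]
      by_cases hx : x ∈ Finset.univ.image H <;> simp [hx]
    rw [hsuppeq] at hb
    have hcard : (Finset.univ.image H).card = 12 := by
      rw [Finset.card_image_of_injective _ hinj, Finset.card_univ, Fintype.card_fin]
    rw [hcard, Finset.card_univ, Fintype.card_fin] at hb
    have h4 : m - (m - 4) = 4 := by omega
    rw [h4] at hb
    norm_num at hb
  · push_neg at hm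
    obtain ⟨S, _, hS⟩ := exists_coeffF _ hne
    apply hS
    apply hvanish
    have := Finset.card_le_univ (Finset.univ \ S)
    rw [Fintype.card_fin] at this
    omega

-- ZMod arithmetic facts
lemma zmod2_cases : ∀ x : ZMod 2, x = 0 ∨ x = 1 := by decide
lemma zmod2_mul_self : ∀ x : ZMod 2, x * x = x := by decide
lemma alpha_add : ∀ x y : ZMod 4, alphaZ4 (x + y) = alphaZ4 x + alphaZ4 y := by decide
lemma beta_gamma : ∀ x : ZMod 4, betaZ4 x + gammaZ4 x = alphaZ4 x := by decide
lemma key3 : ∀ x y z : ZMod 4,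
    (betaZ4 (x + y) + betaZ4 x + betaZ4 y) * betaZ4 z
      + (gammaZ4 (x + y) + gammaZ4 x + gammaZ4 y) * gammaZ4 z
    = alphaZ4 x * alphaZ4 y * alphaZ4 z := by decide

lemma hammingNorm_comp_equiv {n : ℕ} {κ : Type} [Fintype κ] [DecidableEq κ]
    (w : κ → ZMod 2) (e : Fin n ≃ κ) : hammingNorm (w ∘ e) = hammingNorm w := by
  unfold hammingNorm
  apply Finset.card_bij (fun i _ => e i)
  · intro a ha
    simp only [Finset.mem_filter, Finset.mem_univ, true_and] at ha ⊢
    exact ha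
  · intro a _ b _ hab
    exact e.injective hab
  · intro b hb
    refine ⟨e.symm b, ?_, e.apply_symm_apply b⟩
    simp only [Finset.mem_filter, Finset.mem_univ, true_and, Function.comp_apply,
      e.apply_symm_apply] at hb ⊢
    exact hb

lemma zmod2_add_self : ∀ x : ZMod 2, x + x = 0 := by decide
lemma sum12_one : (∑ _i : Fin 12, (1 : ZMod 2)) = 0 := by decide

theorem golay_not_z4linear (C : Submodule (ZMod 2) (Fin 24 → ZMod 2))
    (hdim : Module.finrank (ZMod 2) C = 12)
    (hselfdual : (C : Set (Fin 24 → ZMod 2)) =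
      { b | ∀ a ∈ C, ∑ i, a i * b i = 0 })
    (hmin : ∀ c ∈ C, c ≠ 0 → 8 ≤ hammingNorm c) :
    ¬ IsZ4Linear (C : Set (Fin 24 → ZMod 2)) 12 := by
  rintro ⟨e, D, himg⟩
  classical
  set C' : Set ((Fin 12 ⊕ Fin 12) → ZMod 2) := (fun c => c ∘ e.symm) '' ↑C with hC'
  have hmem : ∀ w : (Fin 12 ⊕ Fin 12) → ZMod 2, w ∈ C' ↔ w ∘ e ∈ C := by
    intro w
    constructor
    · rintro ⟨c, hc, rfl⟩
      have hcc : (c ∘ ⇑e.symm) ∘ ⇑e = c := by funext x; simp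
      rwa [hcc]
    · intro hwe
      exact ⟨w ∘ e, hwe, by funext x; simp⟩
  have hgray : ∀ d, d ∈ D → grayMap d ∈ C' := by
    intro d hd
    rw [himg]
    exact ⟨d, hd, rfl⟩
  have hrev : ∀ w ∈ C', ∃ d ∈ D, w = grayMap d := by
    intro w hw
    rw [himg] at hw
    obtain ⟨d, hd, hh⟩ := hw
    exact ⟨d, hd, hh.symm⟩
  have sd : ∀ u ∈ C', ∀ v ∈ C', ∑ k, u k * v k = 0 := by
    intro u hu v hv
    have hu' : u ∘ e ∈ C := (hmem u).1 hu
    have hv' : (v ∘ e : Fin 24 → ZMod 2) ∈ {b | ∀ a ∈ C, ∑ i, a i * b i = 0} := by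
      rw [← hselfdual]
      exact (hmem v).1 hv
    have hz := hv' (u ∘ e) hu'
    rw [← Equiv.sum_comp e (fun k => u k * v k)]
    exact hz
  have sd' : ∀ w, (∀ u ∈ C', ∑ k, u k * w k = 0) → w ∈ C' := by
    intro w hw
    rw [hmem]
    have hmem' : (w ∘ e : Fin 24 → ZMod 2) ∈ {b | ∀ a ∈ C, ∑ i, a i * b i = 0} := by
      intro a ha
      have haC' : ((a ∘ ⇑e.symm : (Fin 12 ⊕ Fin 12) → ZMod 2)) ∈ C' := ⟨a, ha, rfl⟩
      have hz := hw _ haC'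
      rw [← Equiv.sum_comp e (fun k => (a ∘ ⇑e.symm) k * w k)] at hz
      simpa using hz
    rw [← hselfdual] at hmem'
    exact hmem'
  have hminC' : ∀ w ∈ C', ∀ k, w k ≠ 0 → 8 ≤ hammingNorm w := by
    intro w hw k hk
    have hwC : w ∘ e ∈ C := (hmem w).1 hw
    have hne : (w ∘ e : Fin 24 → ZMod 2) ≠ 0 := by
      intro h0
      apply hk
      have := congrFun h0 (e.symm k)
      simpa using this
    have := hmin _ hwC hne
    rwa [hammingNorm_comp_equiv w e] at this
  -- triple sums of alpha-values vanish
  have A3 : ∀ d ∈ D, ∀ d' ∈ D, ∀ d'' ∈ D,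
      ∑ i : Fin 12, alphaZ4 (d i) * alphaZ4 (d' i) * alphaZ4 (d'' i) = 0 := by
    intro d hd d' hd' d'' hd''
    set P : (Fin 12 ⊕ Fin 12) → ZMod 2 := grayMap (d + d') + grayMap d + grayMap d' with hP
    have hPC : P ∈ C' := by
      rw [hmem]
      have h1 : (grayMap (d + d')) ∘ ⇑e ∈ C := (hmem _).1 (hgray _ (add_mem hd hd'))
      have h2 : (grayMap d) ∘ ⇑e ∈ C := (hmem _).1 (hgray _ hd)
      have h3 : (grayMap d') ∘ ⇑e ∈ C := (hmem _).1 (hgray _ hd')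
      exact add_mem (add_mem h1 h2) h3
    have h0 := sd P hPC (grayMap d'') (hgray _ hd'')
    rw [Fintype.sum_sum_type, ← Finset.sum_add_distrib] at h0
    rw [← h0]
    apply Finset.sum_congr rfl
    intro i _
    simp only [hP, Pi.add_apply, grayMap, Sum.elim_inl, Sum.elim_inr]
    exact (key3 (d i) (d' i) (d'' i)).symm
  -- columns are distinct
  have hcol : ∀ i i' : Fin 12, i ≠ i' →
      (∀ d ∈ D, alphaZ4 (d i) = alphaZ4 (d i')) → False := by
    intro i i' hnii hall
    set f : Fin 12 → ZMod 2 := fun t => if t = i ∨ t = i' then 1 else 0 with hf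
    set w : (Fin 12 ⊕ Fin 12) → ZMod 2 := Sum.elim f f with hw
    have hsum2 : ∀ g : Fin 12 → ZMod 2, ∑ t : Fin 12, g t * f t = g i + g i' := by
      intro g
      have hpt : ∀ t, g t * f t = if t ∈ ({i, i'} : Finset (Fin 12)) then g t else 0 := by
        intro t
        simp only [hf]
        by_cases hc : t = i ∨ t = i'
        · rw [if_pos hc, if_pos (by simp [Finset.mem_insert, Finset.mem_singleton]; exact hc),
            mul_one]
        · rw [if_neg hc, if_neg (by simp only [Finset.mem_insert, Finset.mem_singleton]; exact hc),
            mul_zero]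
      rw [Finset.sum_congr rfl (fun t _ => hpt t), Finset.sum_ite_mem, Finset.univ_inter,
        Finset.sum_pair hnii]
    have hwC : w ∈ C' := by
      apply sd'
      intro u hu
      obtain ⟨d, hd, rfl⟩ := hrev u hu
      have hba := hsum2 (fun t => betaZ4 (d t))
      have hga := hsum2 (fun t => gammaZ4 (d t))
      calc ∑ k, grayMap d k * w k
          = (∑ t : Fin 12, betaZ4 (d t) * f t) + ∑ t : Fin 12, gammaZ4 (d t) * f t := by
            rw [Fintype.sum_sum_type]
            simp only [hw, grayMap, Sum.elim_inl, Sum.elim_inr]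
      _ = (betaZ4 (d i) + gammaZ4 (d i)) + (betaZ4 (d i') + gammaZ4 (d i')) := by
            rw [hba, hga]; ring
      _ = alphaZ4 (d i) + alphaZ4 (d i') := by rw [beta_gamma, beta_gamma]
      _ = 0 := by rw [hall d hd]; exact zmod2_add_self _
    have h8 : 8 ≤ hammingNorm w := by
      apply hminC' w hwC (Sum.inl i)
      simp [hw, hf]
    have hsub : Finset.univ.filter (fun k => w k ≠ 0)
        ⊆ {Sum.inl i, Sum.inl i', Sum.inr i, Sum.inr i'} := by
      intro k hk
      rw [Finset.mem_filter] at hk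
      have hk' := hk.2
      simp only [Finset.mem_insert, Finset.mem_singleton]
      cases k with
      | inl t =>
        have : f t ≠ 0 := by simpa [hw] using hk'
        simp only [hf] at this
        by_cases hc : t = i ∨ t = i'
        · rcases hc with rfl | rfl
          · exact Or.inl rfl
          · exact Or.inr (Or.inl rfl)
        · exact absurd (if_neg hc) this
      | inr t =>
        have : f t ≠ 0 := by simpa [hw] using hk'
        simp only [hf] at this
        by_cases hc : t = i ∨ t = i'
        · rcases hc with rfl | rfl
          · exact Or.inr (Or.inr (Or.inl rfl))
          · exact Or.inr (Or.inr (Or.inr rfl))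
        · exact absurd (if_neg hc) this
    have h4 : ({Sum.inl i, Sum.inl i', Sum.inr i, Sum.inr i'} :
        Finset (Fin 12 ⊕ Fin 12)).card ≤ 4 := by
      apply le_trans (Finset.card_insert_le _ _)
      apply Nat.succ_le_succ
      apply le_trans (Finset.card_insert_le _ _)
      apply Nat.succ_le_succ
      apply le_trans (Finset.card_insert_le _ _)
      apply Nat.succ_le_succ
      simp
    have := le_trans (Finset.card_le_card hsub) h4
    unfold hammingNorm at h8
    omega
  -- the alpha-image as a submodule
  set S₁ : Set (Fin 12 → ZMod 2) := {a | ∃ d ∈ D, a = fun i => alphaZ4 (d i)} with hS₁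
  have hzeroS : (0 : Fin 12 → ZMod 2) ∈ S₁ := by
    refine ⟨0, zero_mem D, ?_⟩
    funext i
    show (0 : ZMod 2) = alphaZ4 0
    decide
  let C1 : Submodule (ZMod 2) (Fin 12 → ZMod 2) :=
    { carrier := S₁
      add_mem' := by
        rintro a b ⟨d, hd, rfl⟩ ⟨d', hd', rfl⟩
        refine ⟨d + d', add_mem hd hd', ?_⟩
        funext i
        simp [Pi.add_apply, alpha_add]
      zero_mem' := hzeroS
      smul_mem' := by
        intro k a ha
        rcases zmod2_cases k with rfl | rfl
        · rw [zero_smul]; exact hzeroS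
        · rw [one_smul]; exact ha }
  have hC1mem : ∀ a, a ∈ C1 ↔ a ∈ S₁ := fun a => Iff.rfl
  haveI : Module.Finite (ZMod 2) C1 := Module.Finite.iff_fg.2 (IsNoetherian.noetherian C1)
  set m := Module.finrank (ZMod 2) C1 with hm
  let bas : Module.Basis (Fin m) (ZMod 2) C1 := Module.finBasis (ZMod 2) C1
  set h : Fin 12 → (Fin m → ZMod 2) := fun i t => (bas t : Fin 12 → ZMod 2) i with hh
  have hbasS : ∀ t, (fun i => h i t) ∈ S₁ := by
    intro t
    have := (bas t).2
    simpa [hh] using this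
  set H : Fin 12 → Finset (Fin m) := fun i => Finset.univ.filter (fun t => h i t = 1) with hH
  have hHinj : Function.Injective H := by
    intro i i' hii
    by_contra hnii
    have hhe : ∀ t, h i t = h i' t := by
      intro t
      have hiff : (h i t = 1) ↔ (h i' t = 1) := by
        constructor
        · intro h1
          have : t ∈ H i := by simp [hH, h1]
          rw [hii] at this
          simpa [hH] using this
        · intro h1
          have : t ∈ H i' := by simp [hH, h1]
          rw [← hii] at this
          simpa [hH] using this
      rcases zmod2_cases (h i t) with h1 | h1 <;> rcases zmod2_cases (h i' t) with h2 | h2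
      · rw [h1, h2]
      · exfalso; rw [h1, h2] at hiff; exact absurd (hiff.2 rfl) (by decide)
      · exfalso; rw [h1, h2] at hiff; exact absurd (hiff.1 rfl) (by decide)
      · rw [h1, h2]
    have hall : ∀ x : C1, (x : Fin 12 → ZMod 2) i = (x : Fin 12 → ZMod 2) i' := by
      have hext : (LinearMap.proj i).comp C1.subtype
          = (LinearMap.proj (R := ZMod 2) (φ := fun _ : Fin 12 => ZMod 2) i').comp C1.subtype := by
        apply Module.Basis.ext bas
        intro t
        simpa [hh] using hhe t
      intro x
      have := LinearMap.congr_fun hext x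
      simpa using this
    apply hcol i i' hnii
    intro d hd
    have hmemd : (fun j => alphaZ4 (d j)) ∈ S₁ := ⟨d, hd, rfl⟩
    have := hall ⟨_, hmemd⟩
    simpa using this
  have A3' : ∀ a ∈ S₁, ∀ b ∈ S₁, ∀ c ∈ S₁, ∑ i : Fin 12, a i * b i * c i = 0 := by
    rintro a ⟨d, hd, rfl⟩ b ⟨d', hd', rfl⟩ c ⟨d'', hd'', rfl⟩
    exact A3 d hd d' hd' d'' hd''
  have A2' : ∀ a ∈ S₁, ∀ b ∈ S₁, ∑ i : Fin 12, a i * b i = 0 := by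
    intro a ha b hb
    have := A3' a ha b hb b hb
    rw [← this]
    apply Finset.sum_congr rfl
    intro i _
    rw [mul_assoc, zmod2_mul_self]
  have A1' : ∀ a ∈ S₁, ∑ i : Fin 12, a i = 0 := by
    intro a ha
    have := A2' a ha a ha
    rw [← this]
    apply Finset.sum_congr rfl
    intro i _
    rw [zmod2_mul_self]
  have hmoments : ∀ T : Finset (Fin m), T.card ≤ 3 →
      ∑ i : Fin 12, (if T ⊆ H i then (1 : ZMod 2) else 0) = 0 := by
    intro T hT
    have hprod : ∀ i, (if T ⊆ H i then (1 : ZMod 2) else 0) = ∏ t ∈ T, h i t := by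
      intro i
      by_cases hsub : T ⊆ H i
      · rw [if_pos hsub]
        symm
        apply Finset.prod_eq_one
        intro t ht
        have := hsub ht
        simpa [hH] using this
      · rw [if_neg hsub]
        obtain ⟨t, ht, htn⟩ := Finset.not_subset.1 hsub
        symm
        apply Finset.prod_eq_zero ht
        have hne1 : h i t ≠ 1 := by simpa [hH] using htn
        rcases zmod2_cases (h i t) with h0 | h1
        · exact h0
        · exact absurd h1 hne1
    rw [Finset.sum_congr rfl (fun i _ => hprod i)]
    rcases (show T.card = 0 ∨ T.card = 1 ∨ T.card = 2 ∨ T.card = 3 by omega)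
      with h0 | h1 | h2 | h3
    · rw [Finset.card_eq_zero.1 h0]
      simp only [Finset.prod_empty]
      exact sum12_one
    · obtain ⟨t, rfl⟩ := Finset.card_eq_one.1 h1
      simp only [Finset.prod_singleton]
      exact A1' _ (hbasS t)
    · obtain ⟨t1, t2, hne12, rfl⟩ := Finset.card_eq_two.1 h2
      rw [Finset.sum_congr rfl (fun i _ => Finset.prod_pair hne12)]
      exact A2' _ (hbasS t1) _ (hbasS t2)
    · obtain ⟨t1, t2, t3, h12, h13, h23, rfl⟩ := Finset.card_eq_three.1 h3
      have hpt : ∀ i, ∏ t ∈ ({t1, t2, t3} : Finset (Fin m)), h i t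
          = h i t1 * h i t2 * h i t3 := by
        intro i
        rw [Finset.prod_insert (by simp [h12, h13]), Finset.prod_pair h23, mul_assoc]
      rw [Finset.sum_congr rfl (fun i _ => hpt i)]
      exact A3' _ (hbasS t1) _ (hbasS t2) _ (hbasS t3)
  exact no_small_design H hHinj hmoments
end

section
/- For a linear code D over Z/4Z of length n, the Hamming weight enumerator of the binary Gray image C = φ(D) satisfies W_C(x,y) = swe_D(x², xy, y²), where swe_D is the symmetrized weight enumerator of D. -/
/-- Number of coordinates equal to 0. -/
def N0 {n : ℕ} (a : Fin n → ZMod 4) : ℕ := (Finset.univ.filter fun i => a i = 0).card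
/-- Number of coordinates equal to ±1. -/
def N1 {n : ℕ} (a : Fin n → ZMod 4) : ℕ :=
  (Finset.univ.filter fun i => a i = 1 ∨ a i = 3).card
/-- Number of coordinates equal to 2. -/
def N2 {n : ℕ} (a : Fin n → ZMod 4) : ℕ := (Finset.univ.filter fun i => a i = 2).card

/-- The dual of a quaternary code under the standard inner product mod 4. -/
def dualSet {n : ℕ} (D : Set (Fin n → ZMod 4)) : Set (Fin n → ZMod 4) :=
  { b | ∀ a ∈ D, ∑ i, a i * b i = 0 }

lemma gray_coord_inj : ∀ u v : ZMod 4, betaZ4 u = betaZ4 v → gammaZ4 u = gammaZ4 v → u = v := by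
  decide

lemma gray_inj {n : ℕ} : Function.Injective (grayMap (n := n)) := by
  intro a b h
  funext i
  exact gray_coord_inj (a i) (b i)
    (congrFun h (Sum.inl i)) (congrFun h (Sum.inr i))

lemma indicator_sum (u : ZMod 4) :
    (if u = 0 then 1 else 0) + (if u = 1 ∨ u = 3 then 1 else 0) + (if u = 2 then 1 else 0) = 1 := by
  revert u; decide

lemma Nsum {n : ℕ} (a : Fin n → ZMod 4) : N0 a + N1 a + N2 a = n := by
  classical
  simp only [N0, N1, N2, Finset.card_filter]
  rw [← Finset.sum_add_distrib, ← Finset.sum_add_distrib]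
  simp [indicator_sum, Finset.card_univ]

lemma gray_norm_coord (u : ZMod 4) :
    (if betaZ4 u ≠ 0 then 1 else 0) + (if gammaZ4 u ≠ 0 then 1 else 0)
      = (if u = 1 ∨ u = 3 then 1 else 0) + 2 * (if u = 2 then 1 else 0) := by
  revert u; decide

lemma gray_norm {n : ℕ} (a : Fin n → ZMod 4) :
    hammingNorm (grayMap a) = N1 a + 2 * N2 a := by
  classical
  simp only [hammingNorm, N1, N2, Finset.card_filter]
  rw [Fintype.sum_sum_type]
  simp only [grayMap, Sum.elim_inl, Sum.elim_inr]
  rw [← Finset.sum_add_distrib, Finset.mul_sum, ← Finset.sum_add_distrib]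
  exact Finset.sum_congr rfl fun i _ => gray_norm_coord (a i)

theorem weightEnumerator_eq_swe {n : ℕ} (D : AddSubgroup (Fin n → ZMod 4))
    (R : Type) [CommRing R] (x y : R) :
    ∑ᶠ c ∈ grayMap '' (D : Set (Fin n → ZMod 4)),
        x ^ (2 * n - hammingNorm c) * y ^ hammingNorm c =
    ∑ᶠ a ∈ (D : Set (Fin n → ZMod 4)),
        (x ^ 2) ^ N0 a * (x * y) ^ N1 a * (y ^ 2) ^ N2 a := by
  rw [finsum_mem_image (gray_inj.injOn)]
  apply finsum_mem_congr rfl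
  intro a _
  have hn := Nsum a
  rw [gray_norm a]
  have h1 : 2 * n - (N1 a + 2 * N2 a) = 2 * N0 a + N1 a := by omega
  rw [h1, mul_pow, pow_add, pow_add, pow_mul, pow_mul]
  ring
end
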